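/- Let k be a field, C a k-coalgebra and C* its dual convolution algebra. Suppose C is left quasi-co-Frobenius (left QcF): there exists a set I and an injective morphism of left C*-modules from C (with its canonical left C*-module structure f ⇀ c = Σ c₁ f(c₂)) into the direct product (C*)^I. Then C* is left Rat-Kasch: every simple rational left C*-module embeds into C* as a left C*-module. -/

import Mathlib

open TensorProduct Coalgebra

noncomputable section

namespace Paper

variable {k : Type*} [Field k] {C : Type*} [AddCommGroup C] [Module k C] [Coalgebra k C]

/-- The convolution product on the dual of a coalgebra. -/
def conv (f g : Module.Dual k C) : Module.Dual k C :=
  LinearMap.mul' k k ∘ₗ TensorProduct.map f g ∘ₗ comul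

lemma conv_apply (f g : Module.Dual k C) (c : C) :
    conv f g c = LinearMap.mul' k k (TensorProduct.map f g (comul c)) := rfl

private lemma conv_assoc (f g h : Module.Dual k C) : conv (conv f g) h = conv f (conv g h) := by
  have h1 : (LinearMap.mul' k k ∘ₗ TensorProduct.map (conv f g) h : C ⊗[k] C →ₗ[k] k)
      = (LinearMap.mul' k k ∘ₗ TensorProduct.map
          (LinearMap.mul' k k ∘ₗ TensorProduct.map f g) h)
        ∘ₗ (comul (R := k) (A := C)).rTensor C := by
    ext x y
    simp [conv_apply]
  have h2 : (LinearMap.mul' k k ∘ₗ TensorProduct.map f (conv g h) : C ⊗[k] C →ₗ[k] k)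
      = (LinearMap.mul' k k ∘ₗ TensorProduct.map f
          (LinearMap.mul' k k ∘ₗ TensorProduct.map g h))
        ∘ₗ (comul (R := k) (A := C)).lTensor C := by
    ext x y
    simp [conv_apply]
  have h3 : (LinearMap.mul' k k ∘ₗ TensorProduct.map f
          (LinearMap.mul' k k ∘ₗ TensorProduct.map g h))
        ∘ₗ (TensorProduct.assoc k C C C).toLinearMap
      = LinearMap.mul' k k ∘ₗ TensorProduct.map
          (LinearMap.mul' k k ∘ₗ TensorProduct.map f g) h := by
    apply TensorProduct.ext_threefold
    intro x y z
    simp [mul_assoc]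
  ext c
  have e1 : conv (conv f g) h c
      = (LinearMap.mul' k k ∘ₗ TensorProduct.map (conv f g) h) (comul c) := rfl
  have e2 : conv f (conv g h) c
      = (LinearMap.mul' k k ∘ₗ TensorProduct.map f (conv g h)) (comul c) := rfl
  rw [e1, e2, h1, h2]
  simp only [LinearMap.comp_apply]
  rw [← Coalgebra.coassoc_apply (R := k) c]
  exact (LinearMap.congr_fun h3 ((comul (R := k) (A := C)).rTensor C (comul c))).symm

private lemma counit_conv (f : Module.Dual k C) : conv counit f = f := by
  have h1 : (TensorProduct.map (counit (R := k) (A := C)) f : C ⊗[k] C →ₗ[k] k ⊗[k] k)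
      = f.lTensor k ∘ₗ (counit (R := k) (A := C)).rTensor C := by
    ext x y
    simp
  ext c
  rw [conv_apply, h1, LinearMap.comp_apply, Coalgebra.rTensor_counit_comul,
    LinearMap.lTensor_tmul, LinearMap.mul'_apply, one_mul]

private lemma conv_counit (f : Module.Dual k C) : conv f counit = f := by
  have h1 : (TensorProduct.map f (counit (R := k) (A := C)) : C ⊗[k] C →ₗ[k] k ⊗[k] k)
      = f.rTensor k ∘ₗ (counit (R := k) (A := C)).lTensor C := by
    ext x y
    simp
  ext c
  rw [conv_apply, h1, LinearMap.comp_apply, Coalgebra.lTensor_counit_comul,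
    LinearMap.rTensor_tmul, LinearMap.mul'_apply, mul_one]

private lemma conv_add (f g h : Module.Dual k C) : conv f (g + h) = conv f g + conv f h := by
  ext c
  simp only [conv_apply, TensorProduct.map_add_right, LinearMap.add_apply, map_add]

private lemma add_conv (f g h : Module.Dual k C) : conv (f + g) h = conv f h + conv g h := by
  ext c
  simp only [conv_apply, TensorProduct.map_add_left, LinearMap.add_apply, map_add]

private lemma zero_conv (f : Module.Dual k C) : conv 0 f = 0 := by
  ext c
  have : TensorProduct.map (0 : Module.Dual k C) f = 0 := by
    ext x y; simp
  simp [conv_apply, this]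

private lemma conv_zero (f : Module.Dual k C) : conv f 0 = 0 := by
  ext c
  have : TensorProduct.map f (0 : Module.Dual k C) = 0 := by
    ext x y; simp
  simp [conv_apply, this]

/-- The convolution algebra structure on the dual of a coalgebra. -/
instance instRingDual : Ring (Module.Dual k C) where
  __ := (inferInstance : AddCommGroup (Module.Dual k C))
  mul := conv
  one := counit
  mul_assoc := conv_assoc
  one_mul := counit_conv
  mul_one := conv_counit
  left_distrib := conv_add
  right_distrib := add_conv
  zero_mul := zero_conv
  mul_zero := conv_zero

lemma dual_mul_def (f g : Module.Dual k C) : f * g = conv f g := rfl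

lemma dual_mul_apply (f g : Module.Dual k C) (c : C) :
    (f * g) c = LinearMap.mul' k k (TensorProduct.map f g (comul c)) := rfl

lemma dual_one_def : (1 : Module.Dual k C) = counit := rfl

variable {k : Type*} [Field k] {C : Type*} [AddCommGroup C] [Module k C] [Coalgebra k C]

instance : IsScalarTower k (Module.Dual k C) (Module.Dual k C) :=
  ⟨fun a f g => by
    show conv (a • f) g = a • conv f g
    ext c
    simp [conv_apply, TensorProduct.map_smul_left]⟩

/-- For a subset `X ⊆ C`, its orthogonal `X^⊥ ⊆ C*`. -/
def perpC (X : Set C) : Set (Module.Dual k C) := {f | ∀ x ∈ X, f x = 0}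

/-- For a subset `Y ⊆ C*`, its orthogonal `Y^⊥ ⊆ C`. -/
def perpD (Y : Set (Module.Dual k C)) : Set C := {c | ∀ f ∈ Y, f c = 0}

/-- For `h ∈ C*`, the map `c ↦ ∑ c₁ h(c₂)`; this is the canonical left action of `C*` on `C`. -/
def wedge (h : Module.Dual k C) : C →ₗ[k] C :=
  (TensorProduct.rid k C).toLinearMap ∘ₗ h.lTensor C ∘ₗ comul

variable (k C) in
/-- A left `C*`-module `M` is rational if every element `m` admits finitely many
`mᵢ ∈ M`, `cᵢ ∈ C` with `f • m = ∑ᵢ f(cᵢ) • mᵢ` for all `f ∈ C*` (the scalar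
`f (cs i) ∈ k` acting through the `k`-multiple `f (cs i) • 1` of the identity of `C*`). -/
def IsRationalLeft (M : Type*) [AddCommGroup M] [Module (Module.Dual k C) M] : Prop :=
  ∀ m : M, ∃ (n : ℕ) (ms : Fin n → M) (cs : Fin n → C),
    ∀ f : Module.Dual k C, f • m = ∑ i, (f (cs i) • (1 : Module.Dual k C)) • ms i

variable (k C) in
/-- A right `C*`-module (i.e. a left module over the opposite ring) `M` is rational if every
element `m` admits finitely many `mᵢ ∈ M`, `cᵢ ∈ C` with `m • f = ∑ᵢ f(cᵢ) • mᵢ` for all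
`f ∈ C*`. -/
def IsRationalRight (M : Type*) [AddCommGroup M] [Module (Module.Dual k C)ᵐᵒᵖ M] : Prop :=
  ∀ m : M, ∃ (n : ℕ) (ms : Fin n → M) (cs : Fin n → C),
    ∀ f : Module.Dual k C,
      (MulOpposite.op f) • m
        = ∑ i, (MulOpposite.op (f (cs i) • (1 : Module.Dual k C))) • ms i

/-- A ring `R` is a left D-ring if every left ideal is a left annihilator. -/
def IsLeftDRing (R : Type*) [Ring R] : Prop :=
  ∀ I : Ideal R, ∃ H : Set R, (I : Set R) = {r : R | ∀ h ∈ H, r * h = 0}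

/-! Take `t ≠ 0` in the simple rational module `T` and a functional `l` with `l t ≠ 0`.
Rationality represents `f ↦ l (f • t)` as evaluation at some `x ∈ C`; then `x ≠ 0` since
`ε x = l t`, and `f ⇀ x = 0` whenever `f • t = 0`. As `φ` is injective and `C*`-linear, some
coordinate `u = φ x i` is nonzero and satisfies `f * u = 0` whenever `f • t = 0`, so
`f • t ↦ f * u` is a well-defined nonzero map `T → C*`, injective because `T` is simple. -/

instance : Algebra k (Module.Dual k C) :=
  Algebra.ofModule smul_mul_assoc fun a f g => by
    show conv f (a • g) = a • conv f g
    ext c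
    simp [conv_apply, TensorProduct.map_smul_right]

lemma apply_wedge (g f : Module.Dual k C) (c : C) : g (wedge f c) = (g * f) c := by
  have h : ((g ∘ₗ (TensorProduct.rid k C).toLinearMap) ∘ₗ f.lTensor C : C ⊗[k] C →ₗ[k] k)
      = LinearMap.mul' k k ∘ₗ TensorProduct.map g f := by
    ext x y
    simp [mul_comm]
  simpa [wedge, dual_mul_apply] using LinearMap.congr_fun h (comul (R := k) c)

section Rational

variable {T : Type*} [AddCommGroup T] [Module (Module.Dual k C) T] [Module k T]
  [IsScalarTower k (Module.Dual k C) T]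

lemma IsRationalLeft.exists_apply_eq_dual_apply_smul (hT : IsRationalLeft k C T) (t : T)
    (l : Module.Dual k T) : ∃ x : C, ∀ f : Module.Dual k C, f x = l (f • t) := by
  obtain ⟨n, ms, cs, h⟩ := hT t
  refine ⟨∑ i, l (ms i) • cs i, fun f => ?_⟩
  simp [h f, mul_comm]

lemma IsRationalLeft.exists_ne_zero_wedge_eq_zero (hT : IsRationalLeft k C T) {t : T}
    (ht : t ≠ 0) : ∃ x : C, x ≠ 0 ∧ ∀ f : Module.Dual k C, f • t = 0 → wedge f x = 0 := by
  obtain ⟨l, hl⟩ : ∃ l : Module.Dual k T, l t ≠ 0 := by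
    by_contra! h
    exact ht ((Module.forall_dual_apply_eq_zero_iff k t).1 h)
  obtain ⟨x, hx⟩ := hT.exists_apply_eq_dual_apply_smul t l
  refine ⟨x, ?_, fun f hf => ?_⟩
  · rintro rfl
    rw [← one_smul (Module.Dual k C) t, ← hx, map_zero] at hl
    exact hl rfl
  · rw [← Module.forall_dual_apply_eq_zero_iff k]
    intro g
    rw [apply_wedge, hx, mul_smul, hf, smul_zero, map_zero]

end Rational

lemma _root_.IsSimpleModule.exists_linearMap_apply_eq {R M : Type*} [Ring R] [AddCommGroup M]
    [Module R M] [IsSimpleModule R M] {m : M} (hm : m ≠ 0) (u : R)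
    (hu : ∀ r : R, r • m = 0 → r * u = 0) : ∃ g : M →ₗ[R] R, g m = u := by
  let p := LinearMap.toSpanSingleton R M m
  have hker : LinearMap.ker p ≤ LinearMap.ker (LinearMap.toSpanSingleton R R u) := hu
  let e := p.quotKerEquivOfSurjective (IsSimpleModule.toSpanSingleton_surjective R hm)
  refine ⟨(LinearMap.ker p).liftQ _ hker ∘ₗ e.symm.toLinearMap, ?_⟩
  have he : e.symm m = Submodule.Quotient.mk 1 := e.symm_apply_eq.2 (one_smul R m).symm
  simp [he]

lemma _root_.IsSimpleModule.exists_injective_linearMap_of_annihilator {R M : Type*} [Ring R]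
    [AddCommGroup M] [Module R M] [IsSimpleModule R M] (m : M) {u : R} (hu₀ : u ≠ 0)
    (hu : ∀ r : R, r • m = 0 → r * u = 0) : ∃ g : M →ₗ[R] R, Function.Injective g := by
  have hm : m ≠ 0 := by
    rintro rfl
    exact hu₀ (by simpa using hu 1 (smul_zero 1))
  obtain ⟨g, hg⟩ := IsSimpleModule.exists_linearMap_apply_eq hm u hu
  exact ⟨g, LinearMap.injective_of_ne_zero fun h => hu₀ (by rw [← hg, h, LinearMap.zero_apply])⟩

universe v

/-- If `C` is left quasi-co-Frobenius, i.e. there is a set `ι` and an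
injective morphism of left `C*`-modules from `C` (with the action `f ⇀ c = Σ c₁ f(c₂)`)
into `(C*)^ι`, then every simple rational left `C*`-module embeds into `C*`. -/
theorem statement7 {k : Type*} [Field k] {C : Type*} [AddCommGroup C] [Module k C]
    [Coalgebra k C] (ι : Type*) (φ : C →+ (ι → Module.Dual k C))
    (hφ : ∀ (f : Module.Dual k C) (c : C) (i : ι), φ (wedge f c) i = f * φ c i)
    (hinj : Function.Injective φ) :
    ∀ (T : Type v) [AddCommGroup T] [Module (Module.Dual k C) T],
      IsSimpleModule (Module.Dual k C) T → IsRationalLeft k C T →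
      ∃ g : T →ₗ[Module.Dual k C] Module.Dual k C, Function.Injective g := by
  intro T _ _ _ hT
  let _ : Module k T := Module.compHom T (algebraMap k (Module.Dual k C))
  have : IsScalarTower k (Module.Dual k C) T := IsScalarTower.of_algebraMap_smul fun _ _ => rfl
  have := IsSimpleModule.nontrivial (Module.Dual k C) T
  obtain ⟨t, ht⟩ := exists_ne (0 : T)
  obtain ⟨x, hx₀, hx⟩ := hT.exists_ne_zero_wedge_eq_zero ht
  obtain ⟨i, hi⟩ : ∃ i, φ x i ≠ 0 := by
    by_contra! h
    exact hx₀ (hinj (by rw [map_zero]; exact funext h))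
  refine IsSimpleModule.exists_injective_linearMap_of_annihilator t hi fun f hf => ?_
  rw [← hφ, hx f hf, map_zero, Pi.zero_apply]

end Paper
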